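/- For every p ∈ (0,1), the empirical plug-in estimator q̂Zₙᴱ(p) = 1 − Q̂ₙᴱ(p/2)/Q̂ₙᴱ((1+p)/2) of the quantile Zenga curve converges almost surely to qZ(p; Q) as n → ∞ (i.e., it is a strongly consistent estimator of qZ(p; Q)). -/

import Mathlib

open MeasureTheory Filter Set
open scoped Topology ENNReal ProbabilityTheory

/-- The (generalized inverse) quantile function of `F`: `Q(p) = inf {t : F t ≥ p}`. -/
noncomputable def quantile (F : ℝ → ℝ) (p : ℝ) : ℝ := sInf {t : ℝ | p ≤ F t}

/-- The quantile Zenga curve `qZ(p; Q) = 1 - Q(p/2)/Q((1+p)/2)`. -/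
noncomputable def qZcurve (Q : ℝ → ℝ) (p : ℝ) : ℝ := 1 - Q (p / 2) / Q ((1 + p) / 2)

/-- The empirical distribution function of the sample `X 0, …, X (n-1)`. -/
noncomputable def empCDF {Ω : Type*} (X : ℕ → Ω → ℝ) (n : ℕ) (ω : Ω) (t : ℝ) : ℝ :=
  (n : ℝ)⁻¹ * ∑ i ∈ Finset.range n, (if X i ω ≤ t then (1 : ℝ) else 0)

/-- Deterministic lemma: if monotone functions `G n` converge to `F` at all rationals,
and `x` is a crossing point of level `q` in the sense below, then the `q`-quantiles of
`G n` converge to `x`. -/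
lemma tendsto_quantile_of_tendsto (F : ℝ → ℝ) (G : ℕ → ℝ → ℝ)
    (hGmono : ∀ n, Monotone (G n)) (q x : ℝ)
    (hlt : ∀ t < x, F t < q) (hgt : ∀ t, x < t → q < F t)
    (hconv : ∀ r : ℚ, Tendsto (fun n => G n r) atTop (𝓝 (F r))) :
    Tendsto (fun n => quantile (G n) q) atTop (𝓝 x) := by
  rw [Metric.tendsto_atTop]
  intro ε hε
  obtain ⟨r1, hr1a, hr1b⟩ := exists_rat_btwn (show x - ε < x by linarith)
  obtain ⟨r2, hr2a, hr2b⟩ := exists_rat_btwn (show x < x + ε by linarith)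
  have h1 : ∀ᶠ n in atTop, G n r1 < q := (hconv r1).eventually_lt_const (hlt r1 hr1b)
  have h2 : ∀ᶠ n in atTop, q < G n r2 := (hconv r2).eventually_const_lt (hgt r2 hr2a)
  obtain ⟨N, hN⟩ := (h1.and h2).exists_forall_of_atTop
  refine ⟨N, fun n hn => ?_⟩
  obtain ⟨hn1, hn2⟩ := hN n hn
  set S : Set ℝ := {t : ℝ | q ≤ G n t} with hS
  have hmem : (r2 : ℝ) ∈ S := le_of_lt hn2
  have hbdd : ∀ t ∈ S, (r1 : ℝ) ≤ t := by
    intro t ht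
    by_contra hcon
    push_neg at hcon
    exact absurd (le_trans ht (hGmono n hcon.le)) (not_le.2 hn1)
  have lo : (r1 : ℝ) ≤ quantile (G n) q := le_csInf ⟨r2, hmem⟩ hbdd
  have hi : quantile (G n) q ≤ (r2 : ℝ) := csInf_le ⟨r1, hbdd⟩ hmem
  rw [Real.dist_eq, abs_sub_lt_iff]
  constructor <;> linarith

/-- Properties of the quantile of `F` at a level `q ∈ (0,1)`. -/
lemma quantile_spec (F : ℝ → ℝ) (hFcont : Continuous F)
    (hF0 : ∀ t ≤ 0, F t = 0)
    (hFstrict : StrictMonoOn F (Set.Ioi (0 : ℝ)))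
    (q : ℝ) (hq0 : 0 < q) (hne : ∃ t, q ≤ F t) :
    0 < quantile F q ∧ F (quantile F q) = q ∧
      (∀ t < quantile F q, F t < q) ∧ (∀ t, quantile F q < t → q < F t) := by
  set S : Set ℝ := {t : ℝ | q ≤ F t} with hSdef
  have hSsub : S ⊆ Set.Ioi (0 : ℝ) := by
    intro t ht
    by_contra hcon
    rw [Set.mem_Ioi, not_lt] at hcon
    rw [Set.mem_setOf_eq, hF0 t hcon] at ht
    linarith
  have hbdd : BddBelow S := ⟨0, fun t ht => (hSsub ht).le⟩
  have hclosed : IsClosed S := isClosed_le continuous_const hFcont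
  have hxS : quantile F q ∈ S := hclosed.csInf_mem hne hbdd
  have hxpos : 0 < quantile F q := hSsub hxS
  have hlt : ∀ t < quantile F q, F t < q := by
    intro t ht
    by_contra hcon
    push_neg at hcon
    exact absurd (csInf_le hbdd (hSdef ▸ hcon)) (not_le.2 ht)
  have hFx : F (quantile F q) = q := by
    refine le_antisymm ?_ hxS
    have htend : Tendsto (fun k : ℕ => quantile F q - 1 / (k + 1)) atTop
        (𝓝 (quantile F q)) := by
      have := tendsto_one_div_add_atTop_nhds_zero_nat (𝕜 := ℝ)
      have h' := this.const_sub (quantile F q)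
      simpa using h'
    have hFt : Tendsto (fun k : ℕ => F (quantile F q - 1 / (k + 1))) atTop
        (𝓝 (F (quantile F q))) := (hFcont.tendsto _).comp htend
    refine le_of_tendsto hFt (Eventually.of_forall fun k => ?_)
    have : quantile F q - 1 / (k + 1 : ℝ) < quantile F q := by
      have : (0 : ℝ) < 1 / (k + 1 : ℝ) := by positivity
      linarith
    exact (hlt _ this).le
  refine ⟨hxpos, hFx, hlt, fun t ht => ?_⟩
  have := hFstrict hxpos (lt_trans hxpos ht : t ∈ Set.Ioi (0:ℝ)) ht
  linarith [hFx ▸ this]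

/-- The strong law for the empirical CDF at a fixed point. -/
lemma empCDF_tendsto_ae {Ω : Type*} [MeasurableSpace Ω] (μ : Measure Ω)
    [IsProbabilityMeasure μ]
    (X : ℕ → Ω → ℝ) (hXmeas : ∀ i, Measurable (X i))
    (hindep : ProbabilityTheory.iIndepFun X μ)
    (F : ℝ → ℝ)
    (hdist : ∀ i t, (μ {ω | X i ω ≤ t}).toReal = F t)
    (t : ℝ) :
    ∀ᵐ ω ∂μ, Tendsto (fun n => empCDF X n ω t) atTop (𝓝 (F t)) := by
  set g : ℝ → ℝ := fun s => if s ≤ t then (1 : ℝ) else 0 with hg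
  have hgmeas : Measurable g := by
    exact Measurable.ite measurableSet_Iic measurable_const measurable_const
  set Y : ℕ → Ω → ℝ := fun i => g ∘ X i with hY
  have hYeq : ∀ i ω, Y i ω = {ω' | X i ω' ≤ t}.indicator (fun _ => (1:ℝ)) ω := by
    intro i ω
    simp only [hY, hg, Function.comp_apply, Set.indicator_apply, Set.mem_setOf_eq]
  have hmeasA : ∀ i, MeasurableSet {ω | X i ω ≤ t} := fun i =>
    (hXmeas i) measurableSet_Iic
  have hint : Integrable (Y 0) μ := by
    have : Integrable ({ω | X 0 ω ≤ t}.indicator (fun _ => (1:ℝ))) μ :=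
      (integrable_const (1:ℝ)).indicator (hmeasA 0)
    exact this.congr (Eventually.of_forall fun ω => (hYeq 0 ω).symm)
  have hindep' : Pairwise (Function.onFun (ProbabilityTheory.IndepFun · · μ) Y) := by
    intro i j hij
    exact (hindep.indepFun hij).comp hgmeas hgmeas
  have hident : ∀ i, ProbabilityTheory.IdentDistrib (Y i) (Y 0) μ μ := by
    intro i
    have hXi : ProbabilityTheory.IdentDistrib (X i) (X 0) μ μ := by
      refine ⟨(hXmeas i).aemeasurable, (hXmeas 0).aemeasurable, ?_⟩
      haveI : IsProbabilityMeasure (μ.map (X i)) :=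
        Measure.isProbabilityMeasure_map (hXmeas i).aemeasurable
      haveI : IsProbabilityMeasure (μ.map (X 0)) :=
        Measure.isProbabilityMeasure_map (hXmeas 0).aemeasurable
      refine Measure.ext_of_Iic _ _ fun a => ?_
      rw [Measure.map_apply (hXmeas i) measurableSet_Iic,
        Measure.map_apply (hXmeas 0) measurableSet_Iic]
      have h1 : (μ (X i ⁻¹' Iic a)).toReal = F a := hdist i a
      have h2 : (μ (X 0 ⁻¹' Iic a)).toReal = F a := hdist 0 a
      exact (ENNReal.toReal_eq_toReal_iff' (measure_ne_top _ _) (measure_ne_top _ _)).1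
        (h1.trans h2.symm)
    exact hXi.comp hgmeas
  have hexp : μ[Y 0] = F t := by
    have h1 : μ[Y 0] = ∫ ω, ({ω' | X 0 ω' ≤ t}.indicator (fun _ => (1:ℝ))) ω ∂μ :=
      integral_congr_ae (Eventually.of_forall fun ω => hYeq 0 ω)
    rw [h1, integral_indicator_const (1:ℝ) (hmeasA 0), smul_eq_mul, mul_one, measureReal_def, hdist 0 t]
  have := ProbabilityTheory.strong_law_ae_real Y hint hindep' hident
  rw [hexp] at this
  filter_upwards [this] with ω hω
  have heq : ∀ n, empCDF X n ω t = (∑ i ∈ Finset.range n, Y i ω) / n := by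
    intro n
    simp only [empCDF, hY, hg, Function.comp_apply]
    rw [inv_mul_eq_div]
  simpa only [heq] using hω

/-- For every `p ∈ (0,1)`, the empirical plug-in estimator
`q̂Zₙᴱ(p) = 1 − Q̂ₙᴱ(p/2)/Q̂ₙᴱ((1+p)/2)` converges almost surely to `qZ(p; Q)`. -/
theorem qZ_empirical_pointwise_as_convergence
{Ω : Type*} [MeasurableSpace Ω] (μ : Measure Ω) [IsProbabilityMeasure μ]
    (X : ℕ → Ω → ℝ) (hXmeas : ∀ i, Measurable (X i))
    (hindep : ProbabilityTheory.iIndepFun X μ)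
    (F : ℝ → ℝ)
    (hdist : ∀ i t, (μ {ω | X i ω ≤ t}).toReal = F t)
    (hFcont : Continuous F)
    (hF0 : ∀ t ≤ 0, F t = 0)
    (hF01 : ∀ t > 0, 0 < F t ∧ F t < 1)
    (hFstrict : StrictMonoOn F (Set.Ioi (0 : ℝ)))
    (p : ℝ) (hp : p ∈ Set.Ioo (0 : ℝ) 1) :
    ∀ᵐ ω ∂μ,
      Tendsto (fun n => qZcurve (quantile (empCDF X n ω)) p) atTop
        (nhds (qZcurve (quantile F) p)) := by
  obtain ⟨hp0, hp1⟩ := hp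
  -- F tends to 1 in the sense that it exceeds any q < 1 eventually
  have hne : ∀ q < (1:ℝ), ∃ t, q ≤ F t := by
    intro q hq
    have hmono : Monotone fun k : ℕ => {ω | X 0 ω ≤ (k : ℝ)} := by
      intro a b hab ω hω
      simp only [Set.mem_setOf_eq] at hω ⊢
      exact le_trans hω (by exact_mod_cast hab)
    have hU : (⋃ k : ℕ, {ω | X 0 ω ≤ (k : ℝ)}) = Set.univ := by
      ext ω
      simp only [Set.mem_iUnion, Set.mem_setOf_eq, Set.mem_univ, iff_true]
      exact exists_nat_ge (X 0 ω)
    have htend := tendsto_measure_iUnion_atTop (μ := μ) hmono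
    rw [hU, measure_univ] at htend
    have htoReal : Tendsto (fun k : ℕ => (μ {ω | X 0 ω ≤ (k : ℝ)}).toReal) atTop
        (𝓝 (1 : ℝ)) := by
      have := (ENNReal.tendsto_toReal (by norm_num : (1:ℝ≥0∞) ≠ ⊤)).comp htend
      exact this
    have htendF : Tendsto (fun k : ℕ => F (k : ℝ)) atTop (𝓝 (1 : ℝ)) := by
      refine htoReal.congr fun k => hdist 0 (k : ℝ)
    obtain ⟨k, hk⟩ := (htendF.eventually_const_lt hq).exists
    exact ⟨(k : ℝ), hk.le⟩
  -- quantile properties at the two levels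
  have hq1 : (0:ℝ) < p / 2 := by linarith
  have hq1' : p / 2 < 1 := by linarith
  have hq2 : (0:ℝ) < (1 + p) / 2 := by linarith
  have hq2' : (1 + p) / 2 < 1 := by linarith
  obtain ⟨hx1pos, hFx1, hlt1, hgt1⟩ :=
    quantile_spec F hFcont hF0 hFstrict (p / 2) hq1 (hne _ hq1')
  obtain ⟨hx2pos, hFx2, hlt2, hgt2⟩ :=
    quantile_spec F hFcont hF0 hFstrict ((1 + p) / 2) hq2 (hne _ hq2')
  -- almost sure convergence of the empirical CDF at all rationals
  have hae : ∀ᵐ ω ∂μ, ∀ r : ℚ, Tendsto (fun n => empCDF X n ω (r : ℝ)) atTop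
      (𝓝 (F (r : ℝ))) :=
    ae_all_iff.2 fun r => empCDF_tendsto_ae μ X hXmeas hindep F hdist (r : ℝ)
  filter_upwards [hae] with ω hω
  have hmono : ∀ n, Monotone (empCDF X n ω) := by
    intro n a b hab
    unfold empCDF
    refine mul_le_mul_of_nonneg_left (Finset.sum_le_sum fun i _ => ?_) (by positivity)
    by_cases h : X i ω ≤ a
    · simp [h, le_trans h hab]
    · simp only [h, if_false]
      split <;> norm_num
  have h1 : Tendsto (fun n => quantile (empCDF X n ω) (p / 2)) atTop
      (𝓝 (quantile F (p / 2))) :=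
    tendsto_quantile_of_tendsto F _ hmono _ _ hlt1 hgt1 hω
  have h2 : Tendsto (fun n => quantile (empCDF X n ω) ((1 + p) / 2)) atTop
      (𝓝 (quantile F ((1 + p) / 2))) :=
    tendsto_quantile_of_tendsto F _ hmono _ _ hlt2 hgt2 hω
  have hdiv := h1.div h2 (ne_of_gt hx2pos)
  have := hdiv.const_sub (1 : ℝ)
  simpa only [qZcurve, Pi.div_apply] using this
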